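/- arXiv:1003.5458 — 5 statements merged into one kernel-verified Lean document; each statement's English description precedes it below -/
import Mathlib

section
/- If G is a cograph (contains no induced path on 4 vertices) and v is any vertex of G, then G * v is a cograph. -/
namespace SimpleGraph

variable {V W : Type*}

/-- Seidel complement of `G` at vertex `v`. -/
def seidel (G : SimpleGraph V) (v : V) : SimpleGraph V where
  Adj x y := Xor' (G.Adj x y)
    ((G.Adj v x ∧ ¬ G.Adj v y ∧ y ≠ v) ∨ (G.Adj v y ∧ ¬ G.Adj v x ∧ x ≠ v))
  symm := by
    constructor
    intro x y h
    unfold Xor' Xor at h ⊢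
    have hc := G.adj_comm x y
    tauto
  loopless := by
    constructor
    intro x h
    unfold Xor' Xor at h
    simp only [G.irrefl] at h
    tauto

/-- A module (homogeneous set in the weak sense) of a graph. -/
def IsModule (G : SimpleGraph V) (M : Set V) : Prop :=
  ∀ x ∉ M, (∀ y ∈ M, G.Adj x y) ∨ (∀ y ∈ M, ¬ G.Adj x y)

/-- A graph is prime w.r.t. modular decomposition. -/
def IsPrime (G : SimpleGraph V) [Fintype V] : Prop :=
  3 ≤ Fintype.card V ∧
    ∀ M : Set V, G.IsModule M → M = ∅ ∨ (∃ x, M = {x}) ∨ M = Set.univ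

/-- `G` has no induced subgraph isomorphic to `H`. -/
def IndFree (G : SimpleGraph V) (H : SimpleGraph W) : Prop :=
  IsEmpty (H ↪g G)

/-- The bull: triangle 0,1,2 with pendant vertices 3 (at 0) and 4 (at 1). -/
def bull : SimpleGraph (Fin 5) :=
  SimpleGraph.fromRel (fun x y =>
    (x, y) ∈ [((0 : Fin 5), (1 : Fin 5)), (1, 2), (0, 2), (0, 3), (1, 4)])

/-- The house: complement of the path on 5 vertices. -/
def house : SimpleGraph (Fin 5) := (pathGraph 5)ᶜ

/-- `G` is (P5, House, Bull)-free. -/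
def PHBFree (G : SimpleGraph V) : Prop :=
  G.IndFree (pathGraph 5) ∧ G.IndFree house ∧ G.IndFree bull

/-- The half graph: `b i` adjacent to `w j` iff `i + j ≤ m + 1` (1-based). -/
def halfGraph (m : ℕ) : SimpleGraph (Fin m ⊕ Fin m) :=
  SimpleGraph.fromRel (fun x y =>
    match x, y with
    | Sum.inl i, Sum.inr j => i.val + j.val < m
    | _, _ => False)

/-- A buoy partition of a set of vertices. -/
def IsBuoy (G : SimpleGraph V) (A : Fin 5 → Set V) : Prop :=
  (∀ i, (A i).Nonempty) ∧
  (∀ i j, i ≠ j → Disjoint (A i) (A j)) ∧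
  (∀ i, ∀ x ∈ A i, ∀ y ∈ A (i + 1), G.Adj x y) ∧
  (∀ i j, i ≠ j → j ≠ i + 1 → i ≠ j + 1 → ∀ x ∈ A i, ∀ y ∈ A j, ¬ G.Adj x y) ∧
  (∀ B : Fin 5 → Set V,
    ((∀ i j, i ≠ j → Disjoint (B i) (B j)) ∧
     (∀ i, ∀ x ∈ B i, ∀ y ∈ B (i + 1), G.Adj x y) ∧
     (∀ i j, i ≠ j → j ≠ i + 1 → i ≠ j + 1 → ∀ x ∈ B i, ∀ y ∈ B j, ¬ G.Adj x y) ∧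
     (∀ i, A i ⊆ B i)) → B = A)

end SimpleGraph

/-!
For `x, y ≠ v`, the Seidel complement `G.seidel v` flips the pair `xy` exactly when `v` is adjacent
to one of `x, y` and not the other, and it leaves the edges at `v` alone. So from an induced `P₄`
on `a, b, c, d` in `G.seidel v` the adjacencies of `G` among `a, b, c, d, v` can be read off once we
know which of `a, b, c, d` are `v` or neighbours of `v`; in every case four of these five vertices
span an induced `P₄` of `G`.
-/

namespace SimpleGraph

variable {V : Type*} {G : SimpleGraph V} {v a b c d : V}

lemma seidel_adj_of_ne {x y : V} (hx : x ≠ v) (hy : y ≠ v) :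
    (G.seidel v).Adj x y ↔ (G.Adj x y ↔ (G.Adj v x ↔ G.Adj v y)) := by
  change Xor _ _ ↔ _
  simp only [xor_def, ne_eq, hx, hy, not_false_eq_true, and_true]
  tauto

lemma seidel_adj_left {y : V} : (G.seidel v).Adj v y ↔ G.Adj v y := by
  change Xor _ _ ↔ _
  simp [xor_def]

lemma seidel_adj_right {x : V} : (G.seidel v).Adj x v ↔ G.Adj v x := by
  rw [adj_comm, seidel_adj_left]

def IsInducedP4 (G : SimpleGraph V) (a b c d : V) : Prop :=
  G.Adj a b ∧ G.Adj b c ∧ G.Adj c d ∧ ¬ G.Adj a c ∧ ¬ G.Adj a d ∧ ¬ G.Adj b d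

namespace IsInducedP4

lemma reverse (h : G.IsInducedP4 a b c d) : G.IsInducedP4 d c b a := by
  obtain ⟨hab, hbc, hcd, hac, had, hbd⟩ := h
  exact ⟨hcd.symm, hbc.symm, hab.symm, (hbd ·.symm), (had ·.symm), (hac ·.symm)⟩

lemma pairwise_ne (h : G.IsInducedP4 a b c d) :
    a ≠ b ∧ a ≠ c ∧ a ≠ d ∧ b ≠ c ∧ b ≠ d ∧ c ≠ d := by
  obtain ⟨hab, hbc, hcd, -, had, hbd⟩ := h
  exact ⟨hab.ne, by rintro rfl; exact had hcd, by rintro rfl; exact hbd hab.symm,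
    hbc.ne, by rintro rfl; exact had hab, hcd.ne⟩

lemma of_seidel_start (h : (G.seidel v).IsInducedP4 v b c d) : G.IsInducedP4 v b d c := by
  obtain ⟨hb, hc, hd, -, -, -⟩ := h.pairwise_ne
  obtain ⟨hvb, hbc, hcd, hvc, hvd, hbd⟩ := h
  rw [seidel_adj_left] at hvb hvc hvd
  rw [seidel_adj_of_ne hb.symm hc.symm] at hbc
  rw [seidel_adj_of_ne hc.symm hd.symm] at hcd
  rw [seidel_adj_of_ne hb.symm hd.symm] at hbd
  simp_all [IsInducedP4, G.adj_comm]

lemma of_seidel_second (h : (G.seidel v).IsInducedP4 a v c d) : G.IsInducedP4 d a v c := by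
  obtain ⟨ha, -, -, hc, hd, -⟩ := h.pairwise_ne
  obtain ⟨hav, hvc, hcd, hac, had, hvd⟩ := h
  rw [seidel_adj_right] at hav
  rw [seidel_adj_left] at hvc hvd
  rw [seidel_adj_of_ne ha hc.symm] at hac
  rw [seidel_adj_of_ne ha hd.symm] at had
  rw [seidel_adj_of_ne hc.symm hd.symm] at hcd
  simp_all [IsInducedP4, G.adj_comm]

lemma exists_of_seidel_of_ne (h : (G.seidel v).IsInducedP4 a b c d)
    (ha : a ≠ v) (hb : b ≠ v) (hc : c ≠ v) (hd : d ≠ v) :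
    ∃ p q r s, G.IsInducedP4 p q r s := by
  obtain ⟨hab, hbc, hcd, hac, had, hbd⟩ := h
  rw [seidel_adj_of_ne ha hb] at hab
  rw [seidel_adj_of_ne hb hc] at hbc
  rw [seidel_adj_of_ne hc hd] at hcd
  rw [seidel_adj_of_ne ha hc] at hac
  rw [seidel_adj_of_ne ha hd] at had
  rw [seidel_adj_of_ne hb hd] at hbd
  simp only [IsInducedP4]
  -- the cases for `(G.Adj v a, G.Adj v b, G.Adj v c, G.Adj v d)` run from `TTTT` to `FFFF`
  by_cases sa : G.Adj v a <;> by_cases sb : G.Adj v b <;> by_cases sc : G.Adj v c <;>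
    by_cases sd : G.Adj v d
  · exact ⟨a, b, c, d, by simp_all⟩
  · exact ⟨d, a, v, c, by simp_all [G.adj_comm]⟩
  · exact ⟨d, v, a, c, by simp_all [G.adj_comm]⟩
  · exact ⟨v, b, d, c, by simp_all [G.adj_comm]⟩
  · exact ⟨a, v, d, b, by simp_all [G.adj_comm]⟩
  · exact ⟨c, v, a, d, by simp_all [G.adj_comm]⟩
  · exact ⟨a, c, b, d, by simp_all [G.adj_comm]⟩
  · exact ⟨v, a, c, b, by simp_all [G.adj_comm]⟩
  · exact ⟨a, d, v, b, by simp_all [G.adj_comm]⟩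
  · exact ⟨a, c, b, d, by simp_all [G.adj_comm]⟩
  · exact ⟨b, v, d, a, by simp_all [G.adj_comm]⟩
  · exact ⟨v, b, d, c, by simp_all [G.adj_comm]⟩
  · exact ⟨v, c, a, b, by simp_all [G.adj_comm]⟩
  · exact ⟨v, c, a, b, by simp_all [G.adj_comm]⟩
  · exact ⟨v, d, b, c, by simp_all [G.adj_comm]⟩
  · exact ⟨a, b, c, d, by simp_all⟩

lemma exists_of_seidel (h : (G.seidel v).IsInducedP4 a b c d) :
    ∃ p q r s, G.IsInducedP4 p q r s := by
  by_cases ha : a = v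
  · subst ha; exact ⟨_, _, _, _, h.of_seidel_start⟩
  by_cases hb : b = v
  · subst hb; exact ⟨_, _, _, _, h.of_seidel_second⟩
  by_cases hc : c = v
  · subst hc; exact ⟨_, _, _, _, h.reverse.of_seidel_second⟩
  by_cases hd : d = v
  · subst hd; exact ⟨_, _, _, _, h.reverse.of_seidel_start⟩
  exact h.exists_of_seidel_of_ne ha hb hc hd

end IsInducedP4

lemma indFree_pathGraph_four_iff :
    G.IndFree (pathGraph 4) ↔ ∀ a b c d, ¬ G.IsInducedP4 a b c d := by
  constructor
  · intro hG a b c d h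
    obtain ⟨nab, nac, nad, nbc, nbd, ncd⟩ := h.pairwise_ne
    have hinj : Function.Injective ![a, b, c, d] := by
      intro i j hij
      fin_cases i <;> fin_cases j <;> simp_all [eq_comm]
    obtain ⟨hab, hbc, hcd, hac, had, hbd⟩ := h
    refine hG.false ⟨⟨![a, b, c, d], hinj⟩, fun {i j} => ?_⟩
    fin_cases i <;> fin_cases j <;> simp_all [pathGraph_adj, G.adj_comm]
  · intro h
    refine ⟨fun f => h (f 0) (f 1) (f 2) (f 3) ?_⟩
    simp [IsInducedP4, pathGraph_adj]

end SimpleGraph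

open SimpleGraph in
theorem stmt3 {V : Type*} (G : SimpleGraph V) (v : V)
    (hG : G.IndFree (pathGraph 4)) : (G.seidel v).IndFree (pathGraph 4) := by
  rw [indFree_pathGraph_four_iff] at hG ⊢
  intro a b c d h
  obtain ⟨p, q, r, s, hpqrs⟩ := h.exists_of_seidel
  exact hG p q r s hpqrs
end

section
/- If the Seidel complement G * v contains an induced subgraph H isomorphic to P5, House, or Bull, and G is (P5, House, Bull)-free, then v is not a vertex of H. -/
namespace SimpleGraph

variable {V W : Type*}

lemma seidel_adj (G : SimpleGraph V) (v x y : V) :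
    (G.seidel v).Adj x y ↔ Xor (G.Adj x y)
      ((G.Adj v x ∧ ¬ G.Adj v y ∧ y ≠ v) ∨ (G.Adj v y ∧ ¬ G.Adj v x ∧ x ≠ v)) :=
  Iff.rfl

@[simp]
lemma seidel_seidel (G : SimpleGraph V) (v : V) : (G.seidel v).seidel v = G := by
  ext x y
  by_cases hvx : G.Adj v x <;> by_cases hvy : G.Adj v y <;> by_cases hx : x = v <;>
    by_cases hy : y = v <;> simp_all [seidel_adj, Xor]

namespace Embedding

variable {G : SimpleGraph V} {H : SimpleGraph W}

def ofAdjIff (f : W → V) (hf : Function.Injective f) (h : ∀ x y, G.Adj (f x) (f y) ↔ H.Adj x y) :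
    H ↪g G :=
  ⟨⟨f, hf⟩, h _ _⟩

lemma seidel_adj_map (f : H ↪g G) (i x y : W) :
    (G.seidel (f i)).Adj (f x) (f y) ↔ (H.seidel i).Adj x y := by
  simp only [seidel_adj, f.map_adj_iff, f.injective.ne_iff]

def ofSeidel {v : V} (f : H ↪g G.seidel v) (i : W) (hi : f i = v) : H.seidel i ↪g G :=
  ofAdjIff f f.injective fun x y => by
    simpa only [hi, seidel_seidel] using f.seidel_adj_map i x y

end Embedding

lemma PHBFree.isEmpty_embedding {G : SimpleGraph V} (hG : G.PHBFree) {K : SimpleGraph (Fin 5)}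
    (hK : K = pathGraph 5 ∨ K = house ∨ K = bull) : IsEmpty (K ↪g G) := by
  rcases hK with rfl | rfl | rfl
  exacts [hG.1, hG.2.1, hG.2.2]

instance : DecidableRel (pathGraph 5).Adj := fun _ _ => decidable_of_iff _ pathGraph_adj.symm

instance : DecidableRel house.Adj := fun x y => decidable_of_iff _ (compl_adj _ x y).symm

instance : DecidableRel bull.Adj := fun x y => decidable_of_iff _ (fromRel_adj _ x y).symm

instance (G : SimpleGraph V) [DecidableEq V] [DecidableRel G.Adj] (v : V) :
    DecidableRel (G.seidel v).Adj := fun x y => decidable_of_iff _ (seidel_adj G v x y).symm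

lemma exists_embedding_seidel {H : SimpleGraph (Fin 5)}
    (hH : H = pathGraph 5 ∨ H = house ∨ H = bull) (i : Fin 5) :
    ∃ K : SimpleGraph (Fin 5), (K = pathGraph 5 ∨ K = house ∨ K = bull) ∧
      Nonempty (K ↪g H.seidel i) := by
  rcases hH with rfl | rfl | rfl <;> fin_cases i
  · exact ⟨bull, by simp, ⟨.ofAdjIff ![1, 3, 4, 0, 2] (by decide) (by decide)⟩⟩
  · exact ⟨house, by simp, ⟨.ofAdjIff ![0, 2, 3, 1, 4] (by decide) (by decide)⟩⟩
  · exact ⟨pathGraph 5, by simp, ⟨.ofAdjIff ![0, 3, 2, 1, 4] (by decide) (by decide)⟩⟩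
  · exact ⟨house, by simp, ⟨.ofAdjIff ![0, 3, 1, 2, 4] (by decide) (by decide)⟩⟩
  · exact ⟨bull, by simp, ⟨.ofAdjIff ![1, 3, 0, 2, 4] (by decide) (by decide)⟩⟩
  · exact ⟨bull, by simp, ⟨.ofAdjIff ![0, 2, 4, 3, 1] (by decide) (by decide)⟩⟩
  · exact ⟨pathGraph 5, by simp, ⟨.ofAdjIff ![0, 2, 3, 1, 4] (by decide) (by decide)⟩⟩
  · exact ⟨house, by simp, ⟨.ofAdjIff ![0, 3, 2, 1, 4] (by decide) (by decide)⟩⟩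
  · exact ⟨pathGraph 5, by simp, ⟨.ofAdjIff ![0, 3, 1, 2, 4] (by decide) (by decide)⟩⟩
  · exact ⟨bull, by simp, ⟨.ofAdjIff ![4, 2, 0, 1, 3] (by decide) (by decide)⟩⟩
  · exact ⟨house, by simp, ⟨.ofAdjIff ![0, 4, 1, 3, 2] (by decide) (by decide)⟩⟩
  · exact ⟨house, by simp, ⟨.ofAdjIff ![1, 3, 0, 4, 2] (by decide) (by decide)⟩⟩
  · exact ⟨bull, by simp, ⟨.ofAdjIff ![0, 1, 2, 4, 3] (by decide) (by decide)⟩⟩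
  · exact ⟨pathGraph 5, by simp, ⟨.ofAdjIff ![3, 0, 4, 1, 2] (by decide) (by decide)⟩⟩
  · exact ⟨pathGraph 5, by simp, ⟨.ofAdjIff ![2, 0, 3, 1, 4] (by decide) (by decide)⟩⟩

end SimpleGraph

open SimpleGraph in
theorem stmt5 {V : Type*} (G : SimpleGraph V) (v : V) (hG : G.PHBFree)
    (H : SimpleGraph (Fin 5)) (hH : H = pathGraph 5 ∨ H = house ∨ H = bull)
    (f : H ↪g G.seidel v) : v ∉ Set.range f := by
  rintro ⟨i, hi⟩
  obtain ⟨K, hK, ⟨e⟩⟩ := exists_embedding_seidel hH i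
  exact (hG.isEmpty_embedding hK).false ((f.ofSeidel i hi).comp e)
end

section
/- A prime graph G on n vertices is bipartite and P5-free if and only if n is even and V(G) can be partitioned into two stable sets B = {b_1,...,b_{n/2}} and W = {w_1,...,w_{n/2}} such that for each i, the neighborhood of b_i is exactly {w_1, ..., w_{n/2 - i + 1}}. -/
/-!
A prime graph is connected and has no twins. In a connected bipartite `P₅`-free graph two
vertices of the same colour are at distance two; so if `ux` and `vy` were edges with `u, v` of
the same colour and `uy`, `vx` non-edges, a common neighbour `z` of `u` and `v` would give the
induced path `x u z v y`. Hence on each side the neighbourhoods form a chain. As there are no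
twins, the degrees on one side are distinct numbers in `1, …, n` where `n` is the size of the
other side; this forces both sides to have the same size `k` and the degrees to be exactly
`1, …, k`, and listing each side by decreasing degree exhibits the half graph. Conversely the
half graph has no induced `2K₂`, so no induced `P₅`.
-/

open Finset Function

section Ferrers

variable {α β : Type*}

/-- A Ferrers relation: equivalently, the sets `{b | r a b}` are totally ordered by inclusion. -/
def IsFerrers (r : α → β → Prop) : Prop :=
  ∀ a a' b b', r a b → r a' b' → r a b' ∨ r a' b

namespace IsFerrers

variable {r : α → β → Prop}

lemma swap (h : IsFerrers r) : IsFerrers (swap r) :=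
  fun _ _ _ _ hab hab' => (h _ _ _ _ hab hab').symm

variable [Fintype β] [DecidableRel r]

lemma rel_of_card_le (h : IsFerrers r) {a a' : α} {b : β}
    (hcard : #(univ.filter (r a)) ≤ #(univ.filter (r a'))) (hab : r a b) : r a' b := by
  by_contra hab'
  obtain ⟨b', hb'a', hb'a⟩ : ∃ b' ∈ univ.filter (r a'), b' ∉ univ.filter (r a) := by
    refine not_subset.mp fun hsub => hab' ?_
    have hb : b ∈ univ.filter (r a) := by simpa using hab
    rw [← eq_of_subset_of_card_le hsub hcard] at hb
    simpa using hb
  simp only [mem_filter, mem_univ, true_and] at hb'a' hb'a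
  exact (h a a' b b' hab hb'a').elim hb'a hab'

lemma exists_rank (h : IsFerrers r) (hr : Injective r) (hne : ∀ a, ∃ b, r a b) :
    ∃ f : α → Fin (Fintype.card β), Injective f ∧
      ∀ a, (f a : ℕ) + #(univ.filter (r a)) = Fintype.card β := by
  have hpos (a : α) : 0 < #(univ.filter (r a)) :=
    let ⟨b, hb⟩ := hne a; card_pos.mpr ⟨b, by simpa using hb⟩
  have hle (a : α) : #(univ.filter (r a)) ≤ Fintype.card β := card_le_univ _
  refine ⟨fun a => ⟨Fintype.card β - #(univ.filter (r a)),
    Nat.sub_lt ((hpos a).trans_le (hle a)) (hpos a)⟩, fun a a' haa' => ?_,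
    fun a => Nat.sub_add_cancel (hle a)⟩
  have hdeg : #(univ.filter (r a)) = #(univ.filter (r a')) := by
    have := hle a
    have := hle a'
    simp only [Fin.mk.injEq] at haa'
    omega
  exact hr (funext fun b => propext ⟨h.rel_of_card_le hdeg.le, h.rel_of_card_le hdeg.ge⟩)

variable [Fintype α]

lemma card_le_card (h : IsFerrers r) (hr : Injective r) (hne : ∀ a, ∃ b, r a b) :
    Fintype.card α ≤ Fintype.card β := by
  obtain ⟨f, hf, -⟩ := h.exists_rank hr hne
  simpa using Fintype.card_le_of_injective f hf

lemma exists_equiv_fin (h : IsFerrers r) (hr : Injective r) (hne : ∀ a, ∃ b, r a b) {k : ℕ}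
    (hα : Fintype.card α = k) (hβ : Fintype.card β = k) :
    ∃ e : Fin k ≃ α, ∀ i, #(univ.filter (r (e i))) = k - i := by
  subst hβ
  obtain ⟨f, hf, hdeg⟩ := h.exists_rank hr hne
  let e := Equiv.ofBijective f
    ((Fintype.bijective_iff_injective_and_card f).mpr ⟨hf, by simp [hα]⟩)
  refine ⟨e.symm, fun i => ?_⟩
  have := hdeg (e.symm i)
  rw [show f (e.symm i) = i from e.apply_symm_apply i] at this
  omega

lemma rel_iff_lt_card (h : IsFerrers r) {k : ℕ} (e : Fin k ≃ α)
    (he : ∀ i, #(univ.filter (r (e i))) = k - i) (i : Fin k) (b : β) :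
    r (e i) b ↔ (i : ℕ) < #(univ.filter (fun a => r a b)) := by
  have hmono {i i' : Fin k} (hii' : i' ≤ i) : r (e i) b → r (e i') b :=
    h.rel_of_card_le (by rw [he, he]; omega)
  constructor
  · intro hib
    have := card_le_card_of_injOn (s := Iic i) (t := univ.filter (fun a => r a b)) e
      (fun i' hi' => by simpa using hmono (mem_Iic.mp hi') hib) e.injective.injOn
    rw [Fin.card_Iic] at this
    omega
  · intro hlt
    by_contra hib
    have := card_le_card_of_injOn (s := univ.filter (fun a => r a b)) (t := Iio i) e.symm
      (fun a ha => by
        simp only [coe_filter, mem_univ, true_and, Set.mem_ofPred_eq] at ha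
        simp only [coe_Iio, Set.mem_Iio]
        by_contra! hia
        exact hib (hmono hia (by simpa using ha)))
      e.symm.injective.injOn
    rw [Fin.card_Iio] at this
    omega

theorem exists_equiv_fin_rel_iff (h : IsFerrers r) (hα : Injective r)
    (hβ : Injective (Function.swap r)) (hα' : ∀ a, ∃ b, r a b) (hβ' : ∀ b, ∃ a, r a b) :
    ∃ k, ∃ eα : Fin k ≃ α, ∃ eβ : Fin k ≃ β, ∀ i j, r (eα i) (eβ j) ↔ (i : ℕ) + j < k := by
  have hcard := le_antisymm (h.card_le_card hα hα') (h.swap.card_le_card hβ hβ')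
  obtain ⟨eα, heα⟩ := h.exists_equiv_fin hα hα' hcard rfl
  obtain ⟨eβ, heβ⟩ := h.swap.exists_equiv_fin hβ hβ' rfl hcard
  refine ⟨_, eα, eβ, fun i j => ?_⟩
  rw [h.rel_iff_lt_card eα heα]
  have := heβ j
  simp only [Function.swap] at this
  omega

end IsFerrers

end Ferrers

namespace SimpleGraph

variable {V W : Type*} {G : SimpleGraph V} {u v : V}

lemma not_indFree_of_adj_iff {H : SimpleGraph W}
    (hH : ∀ i j, (∀ k, H.Adj i k ↔ H.Adj j k) → i = j) (f : W → V)
    (hf : ∀ i j, G.Adj (f i) (f j) ↔ H.Adj i j) : ¬ G.IndFree H := fun h =>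
  h.false ⟨⟨f, fun i j hij => hH i j fun k => by rw [← hf, ← hf, hij]⟩, hf _ _⟩

lemma not_indFree_pathGraph_five {a b c d e : V} (hab : G.Adj a b) (hbc : G.Adj b c)
    (hcd : G.Adj c d) (hde : G.Adj d e) (hac : ¬ G.Adj a c) (had : ¬ G.Adj a d)
    (hae : ¬ G.Adj a e) (hbd : ¬ G.Adj b d) (hbe : ¬ G.Adj b e) (hce : ¬ G.Adj c e) :
    ¬ G.IndFree (pathGraph 5) := by
  refine not_indFree_of_adj_iff (by simp only [pathGraph_adj]; decide) ![a, b, c, d, e] ?_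
  intro i j
  fin_cases i <;> fin_cases j <;> simp [pathGraph_adj, hab, hbc, hcd, hde, hab.symm, hbc.symm,
    hcd.symm, hde.symm, hac, had, hae, hbd, hbe, hce] <;> exact mt Adj.symm ‹_›

/-- The hypothesis says that `G` has no induced `2K₂`. -/
lemma indFree_pathGraph_five_of_adj_or
    (h : ∀ p q s t, G.Adj p q → G.Adj s t → G.Adj p t ∨ G.Adj s q ∨ G.Adj p s ∨ G.Adj q t) :
    G.IndFree (pathGraph 5) := by
  refine ⟨fun f => ?_⟩
  have := h (f 0) (f 1) (f 4) (f 3) (by simp [pathGraph_adj]) (by simp [pathGraph_adj])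
  simp [pathGraph_adj] at this

lemma Walk.dist_getVert_getVert {p : G.Walk u v} (hp : p.length = G.dist u v)
    {i j : ℕ} (hij : i ≤ j) (hj : j ≤ p.length) :
    G.dist (p.getVert i) (p.getVert j) = j - i := by
  have hq := length_eq_dist_of_subwalk hp ((Walk.isSubwalk_drop _ i).trans (p.isSubwalk_take j))
  simp only [Walk.drop_length, Walk.take_length, Walk.take_getVert] at hq
  rw [min_eq_right hij, min_eq_left hj] at hq
  exact hq.symm

lemma Reachable.dist_lt_of_indFree_pathGraph {n : ℕ} (h : G.IndFree (pathGraph (n + 1)))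
    (huv : G.Reachable u v) : G.dist u v < n := by
  by_contra! hn
  obtain ⟨p, hp⟩ := huv.exists_walk_length_eq_dist
  let f : Fin (n + 1) → V := fun i => p.getVert i
  have hdist : ∀ i j, i ≤ j → G.dist (f i) (f j) = j - i :=
    fun i j hij => p.dist_getVert_getVert hp hij (by omega)
  have hinj : f.Injective := by
    intro i j hij
    rcases le_total i j with hle | hle
    · have := hdist i j hle
      rw [hij, dist_self] at this
      omega
    · have := hdist j i hle
      rw [hij, dist_self] at this
      omega
  have hadj : ∀ i j, G.Adj (f i) (f j) ↔ (pathGraph (n + 1)).Adj i j := by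
    intro i j
    rw [← dist_eq_one_iff_adj, pathGraph_adj]
    rcases le_total i j with hle | hle
    · rw [hdist i j hle]; omega
    · rw [dist_comm, hdist j i hle]; omega
  exact h.false ⟨⟨f, hinj⟩, hadj _ _⟩

namespace Coloring

lemma not_adj_of_even_length (c : G.Coloring Bool) (p : G.Walk u v) (hp : Even p.length) :
    ¬ G.Adj u v :=
  fun h => c.valid h (Bool.eq_iff_iff.mpr ((c.even_length_iff_congr p).mp hp))

lemma exists_adj_adj_of_indFree (c : G.Coloring Bool) (hP : G.IndFree (pathGraph 5))
    (huv : G.Reachable u v) (hne : u ≠ v) (hc : c u = c v) : ∃ w, G.Adj u w ∧ G.Adj w v := by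
  obtain ⟨p, hp⟩ := huv.exists_walk_length_eq_dist
  have heven : Even p.length := (c.even_length_iff_congr p).mpr (Bool.eq_iff_iff.mp hc)
  have hlt : G.dist u v < 4 := huv.dist_lt_of_indFree_pathGraph hP
  have hpos : 0 < G.dist u v := huv.pos_dist_of_ne hne
  have h2 : G.edist u v = 2 := by
    rw [← huv.coe_dist_eq_edist, ← hp]
    obtain ⟨m, hm⟩ := heven
    norm_cast
    omega
  obtain ⟨w, hw⟩ := (edist_eq_two_iff.mp h2).2.2
  obtain ⟨huw, hvw⟩ := G.mem_commonNeighbors.mp hw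
  exact ⟨w, huw, hvw.symm⟩

def biadj (c : G.Coloring Bool) (a : {v // c v}) (b : {v // ¬ c v}) : Prop := G.Adj a b

lemma isFerrers_biadj (c : G.Coloring Bool) (hG : G.Preconnected)
    (hP : G.IndFree (pathGraph 5)) : IsFerrers c.biadj := by
  rintro ⟨u, hu⟩ ⟨v, hv⟩ ⟨x, -⟩ ⟨y, -⟩ (hux : G.Adj u x) (hvy : G.Adj v y)
  by_contra! hxy
  obtain ⟨huy, hvx⟩ : ¬ G.Adj u y ∧ ¬ G.Adj v x := hxy
  have hne : u ≠ v := by rintro rfl; exact hvx hux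
  obtain ⟨z, huz, hzv⟩ := c.exists_adj_adj_of_indFree hP (hG u v) hne (hu.trans hv.symm)
  -- `x u z v y` is an induced path: its other pairs are joined by even walks or excluded by `hxy`
  exact not_indFree_pathGraph_five hux.symm huz hzv hvy
    (c.not_adj_of_even_length (.cons hux.symm (.cons huz .nil)) ⟨1, rfl⟩)
    (fun h => hvx h.symm)
    (c.not_adj_of_even_length (.cons hux.symm (.cons huz (.cons hzv (.cons hvy .nil)))) ⟨2, rfl⟩)
    (c.not_adj_of_even_length (.cons huz (.cons hzv .nil)) ⟨1, rfl⟩) huy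
    (c.not_adj_of_even_length (.cons hzv (.cons hvy .nil)) ⟨1, rfl⟩) hP

end Coloring

namespace IsPrime

variable [Fintype V]

lemma eq_univ_of_isModule (hp : G.IsPrime) {M : Set V} (hM : G.IsModule M) {x y : V}
    (hx : x ∈ M) (hy : y ∈ M) (hxy : x ≠ y) : M = Set.univ := by
  rcases hp.2 M hM with rfl | ⟨z, rfl⟩ | h
  · exact absurd hx (Set.notMem_empty x)
  · exact absurd (hx.trans hy.symm) hxy
  · exact h

lemma exists_adj (hp : G.IsPrime) (u : V) : ∃ v, G.Adj u v := by
  classical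
  by_contra! hu
  have hM : G.IsModule {u}ᶜ := fun x hx => Or.inr fun y _ hxy => by
    rw [Set.notMem_compl_iff, Set.mem_singleton_iff] at hx
    exact hu y (hx ▸ hxy)
  obtain ⟨x, hx, y, hy, hxy⟩ : ∃ x ∈ univ.erase u, ∃ y ∈ univ.erase u, x ≠ y := by
    rw [← one_lt_card, card_erase_of_mem (mem_univ u), card_univ]
    have := hp.1
    omega
  have := hp.eq_univ_of_isModule hM (ne_of_mem_erase hx) (ne_of_mem_erase hy) hxy
  exact Set.eq_univ_iff_forall.mp this u rfl

lemma preconnected (hp : G.IsPrime) : G.Preconnected := by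
  intro u v
  obtain ⟨w, huw⟩ := hp.exists_adj u
  have hM : G.IsModule {y | G.Reachable u y} :=
    fun x hx => Or.inr fun y hy hxy => hx (hy.trans hxy.symm.reachable)
  have := hp.eq_univ_of_isModule hM (Reachable.refl u) huw.reachable huw.ne
  exact Set.eq_univ_iff_forall.mp this v

lemma eq_of_adj_iff (hp : G.IsPrime) (h : ∀ x, G.Adj u x ↔ G.Adj v x) : u = v := by
  by_contra huv
  have hM : G.IsModule {u, v} := by
    intro x _
    by_cases hxu : G.Adj x u
    · exact Or.inl (by rintro y (rfl | rfl); exacts [hxu, ((h x).mp hxu.symm).symm])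
    · exact Or.inr (by rintro y (rfl | rfl) hxy; exacts [hxu hxy, hxu ((h x).mpr hxy.symm).symm])
  have huniv := hp.eq_univ_of_isModule hM (Set.mem_insert u _) (Set.mem_insert_of_mem u rfl) huv
  have : Fintype.card V ≤ 2 := by
    classical
    calc Fintype.card V = #(univ : Finset V) := card_univ.symm
      _ ≤ #({u, v} : Finset V) :=
        card_le_card fun x _ => by simpa using Set.eq_univ_iff_forall.mp huniv x
      _ ≤ 2 := card_le_two
  exact absurd hp.1 (by omega)

lemma eq_of_coloring_adj_iff (hp : G.IsPrime) (c : G.Coloring Bool) (huv : c u = c v)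
    (h : ∀ x, c x ≠ c u → (G.Adj u x ↔ G.Adj v x)) : u = v :=
  hp.eq_of_adj_iff fun x => if hx : c x = c u then
    iff_of_false (fun hux => c.valid hux hx.symm) (fun hvx => c.valid hvx (hx.trans huv).symm)
  else h x hx

lemma injective_biadj (hp : G.IsPrime) (c : G.Coloring Bool) : Injective c.biadj := by
  rintro ⟨u, hu⟩ ⟨v, hv⟩ huv
  refine Subtype.ext (hp.eq_of_coloring_adj_iff c (hu.trans hv.symm) fun x hx => ?_)
  exact Iff.of_eq (congrFun huv ⟨x, by rwa [hu] at hx⟩)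

lemma injective_swap_biadj (hp : G.IsPrime) (c : G.Coloring Bool) :
    Injective (swap c.biadj) := by
  rintro ⟨u, hu⟩ ⟨v, hv⟩ huv
  refine Subtype.ext (hp.eq_of_coloring_adj_iff c ?_ fun x hx => ?_)
  · rw [Bool.eq_false_iff.mpr hu, Bool.eq_false_iff.mpr hv]
  · rw [G.adj_comm u, G.adj_comm v]
    exact Iff.of_eq (congrFun huv ⟨x, by simpa [Bool.eq_false_iff.mpr hu] using hx⟩)

lemma exists_biadj (hp : G.IsPrime) (c : G.Coloring Bool) (a : {v // c v}) :
    ∃ b, c.biadj a b :=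
  let ⟨v, hv⟩ := hp.exists_adj a
  ⟨⟨v, fun h => c.valid hv (a.2.trans h.symm)⟩, hv⟩

lemma exists_biadj' (hp : G.IsPrime) (c : G.Coloring Bool) (b : {v // ¬ c v}) :
    ∃ a, c.biadj a b :=
  let ⟨v, hv⟩ := hp.exists_adj b
  ⟨⟨v, by simpa [Bool.eq_false_iff.mpr b.2] using (c.valid hv).symm⟩, hv.symm⟩

end IsPrime

@[simp] lemma not_halfGraph_adj_inl_inl {m : ℕ} (i j : Fin m) :
    ¬ (halfGraph m).Adj (.inl i) (.inl j) := by
  simp [halfGraph]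

@[simp] lemma not_halfGraph_adj_inr_inr {m : ℕ} (i j : Fin m) :
    ¬ (halfGraph m).Adj (.inr i) (.inr j) := by
  simp [halfGraph]

@[simp] lemma halfGraph_adj_inl_inr {m : ℕ} (i j : Fin m) :
    (halfGraph m).Adj (.inl i) (.inr j) ↔ (i : ℕ) + j < m := by
  simp [halfGraph]

@[simp] lemma halfGraph_adj_inr_inl {m : ℕ} (i j : Fin m) :
    (halfGraph m).Adj (.inr j) (.inl i) ↔ (i : ℕ) + j < m := by
  simp [halfGraph]

lemma halfGraph_colorable (m : ℕ) : (halfGraph m).Colorable 2 :=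
  ⟨Coloring.mk (Sum.elim (fun _ => 0) (fun _ => 1)) (by rintro (i | i) (j | j) h <;> simp_all)⟩

lemma halfGraph_indFree_pathGraph_five (m : ℕ) : (halfGraph m).IndFree (pathGraph 5) :=
  indFree_pathGraph_five_of_adj_or (by rintro (p | p) (q | q) (s | s) (t | t) <;> simp <;> omega)

lemma Coloring.nonempty_iso_halfGraph (c : G.Coloring Bool) {k : ℕ} (eα : Fin k ≃ {v // c v})
    (eβ : Fin k ≃ {v // ¬ c v}) (h : ∀ i j, c.biadj (eα i) (eβ j) ↔ (i : ℕ) + j < k) :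
    Nonempty (halfGraph k ≃g G) := by
  refine ⟨⟨(eα.sumCongr eβ).trans (Equiv.sumCompl fun v => c v = true), ?_⟩⟩
  rintro (i | i) (j | j)
  · simpa using fun hij => c.valid hij ((eα i).2.trans (eα j).2.symm)
  · simpa [Coloring.biadj] using h i j
  · simpa [Coloring.biadj, G.adj_comm] using h j i
  · simpa using fun hij => c.valid hij
      ((Bool.eq_false_iff.mpr (eβ i).2).trans (Bool.eq_false_iff.mpr (eβ j).2).symm)

lemma IsPrime.exists_iso_halfGraph [Fintype V] (hp : G.IsPrime) (c : G.Coloring Bool)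
    (hP : G.IndFree (pathGraph 5)) : ∃ k, Nonempty (halfGraph k ≃g G) := by
  classical
  obtain ⟨k, eα, eβ, he⟩ := (c.isFerrers_biadj hp.preconnected hP).exists_equiv_fin_rel_iff
    (hp.injective_biadj c) (hp.injective_swap_biadj c) (hp.exists_biadj c) (hp.exists_biadj' c)
  exact ⟨k, c.nonempty_iso_halfGraph eα eβ he⟩

lemma exists_iso_halfGraph_iff [Fintype V] :
    (∃ k, Nonempty (halfGraph k ≃g G)) ↔
      ∃ k : ℕ, Fintype.card V = 2 * k ∧
        ∃ b w : Fin k → V,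
          Injective b ∧ Injective w ∧
          (∀ i j, b i ≠ w j) ∧
          (∀ x : V, (∃ i, x = b i) ∨ (∃ i, x = w i)) ∧
          (∀ i j, ¬ G.Adj (b i) (b j)) ∧
          (∀ i j, ¬ G.Adj (w i) (w j)) ∧
          (∀ i j, G.Adj (b i) (w j) ↔ i.val + j.val < k) := by
  constructor
  · rintro ⟨k, ⟨e⟩⟩
    refine ⟨k, ?_, e ∘ .inl, e ∘ .inr, e.injective.comp Sum.inl_injective,
      e.injective.comp Sum.inr_injective, fun i j => e.injective.ne Sum.inl_ne_inr,
      fun x => ?_, fun i j => by simp [e.map_adj_iff], fun i j => by simp [e.map_adj_iff],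
      fun i j => by simp [e.map_adj_iff]⟩
    · simpa [two_mul] using (Fintype.card_congr e.toEquiv).symm
    · obtain ⟨i | i, rfl⟩ := e.surjective x
      exacts [.inl ⟨i, rfl⟩, .inr ⟨i, rfl⟩]
  · rintro ⟨k, -, b, w, hb, hw, hbw, hcover, hbb, hww, hadj⟩
    have hbij : Bijective (Sum.elim b w) := ⟨hb.sumElim hw hbw, fun x => by
      rcases hcover x with ⟨i, rfl⟩ | ⟨i, rfl⟩
      exacts [⟨.inl i, rfl⟩, ⟨.inr i, rfl⟩]⟩
    refine ⟨k, ⟨⟨Equiv.ofBijective _ hbij, ?_⟩⟩⟩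
    rintro (i | i) (j | j) <;> simp [hbb, hww, hadj, G.adj_comm (w _)]

end SimpleGraph

open SimpleGraph in
theorem stmt10 {V : Type*} [Fintype V] (G : SimpleGraph V) (hp : G.IsPrime) :
    (G.Colorable 2 ∧ G.IndFree (pathGraph 5)) ↔
      ∃ k : ℕ, Fintype.card V = 2 * k ∧
        ∃ b w : Fin k → V,
          Function.Injective b ∧ Function.Injective w ∧
          (∀ i j, b i ≠ w j) ∧
          (∀ x : V, (∃ i, x = b i) ∨ (∃ i, x = w i)) ∧
          (∀ i j, ¬ G.Adj (b i) (b j)) ∧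
          (∀ i j, ¬ G.Adj (w i) (w j)) ∧
          (∀ i j, G.Adj (b i) (w j) ↔ i.val + j.val < k) := by
  rw [← exists_iso_halfGraph_iff]
  constructor
  · rintro ⟨⟨c⟩, hP⟩
    exact hp.exists_iso_halfGraph (G.recolorOfEquiv finTwoEquiv c) hP
  · rintro ⟨k, ⟨e⟩⟩
    exact ⟨(halfGraph_colorable k).of_hom e.symm.toHom,
      ⟨fun f => (halfGraph_indFree_pathGraph_five k).false (e.symm.toEmbedding.comp f)⟩⟩
end

section
/- The half-graph on 2m vertices with m ≥ 2 (B = {b_1,...,b_m}, W = {w_1,...,w_m}, b_i adjacent to w_j iff i + j ≤ m + 1) is prime: its only modules are the empty set, singletons, and the full vertex set. -/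
/-!
A vertex adjacent to exactly one of two members of a module belongs to the module. In the half
graph two distinct vertices on the same side are separated by a vertex of the other side, and once
a module meets both sides the vertices `w₁` and then `b₁` (index `0` in `Fin m`), each adjacent
to the whole other side, pull in all remaining vertices.
-/

namespace SimpleGraph

variable {V : Type*} {G : SimpleGraph V} {M : Set V}

theorem IsModule.mem_of_adj_of_not_adj (hM : G.IsModule M) {x y z : V} (hx : x ∈ M) (hy : y ∈ M)
    (hzx : G.Adj z x) (hzy : ¬ G.Adj z y) : z ∈ M := by
  by_contra hz
  rcases hM z hz with h | h
  · exact hzy (h y hy)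
  · exact h x hx hzx

namespace halfGraph

open Sum

variable {m : ℕ} {M : Set (Fin m ⊕ Fin m)}

@[simp]
theorem adj_inl_inr (i j : Fin m) : (halfGraph m).Adj (inl i) (inr j) ↔ i.val + j.val < m := by
  simp [halfGraph]

@[simp]
theorem adj_inr_inl (i j : Fin m) : (halfGraph m).Adj (inr j) (inl i) ↔ i.val + j.val < m := by
  rw [adj_comm, adj_inl_inr]

@[simp]
theorem not_adj_inl_inl (i i' : Fin m) : ¬ (halfGraph m).Adj (inl i) (inl i') := by
  simp [halfGraph]

@[simp]
theorem not_adj_inr_inr (j j' : Fin m) : ¬ (halfGraph m).Adj (inr j) (inr j') := by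
  simp [halfGraph]

theorem eq_univ_of_inl_mem_of_inr_mem (hM : (halfGraph m).IsModule M) {i j : Fin m}
    (hi : inl i ∈ M) (hj : inr j ∈ M) : M = Set.univ := by
  have hm : 0 < m := i.pos
  have hw₀ : inr ⟨0, hm⟩ ∈ M := hM.mem_of_adj_of_not_adj hi hj (by simp) (by simp)
  have hB : ∀ k, inl k ∈ M := fun k =>
    hM.mem_of_adj_of_not_adj hw₀ hi (by simp) (by simp)
  have hW : ∀ l, inr l ∈ M := fun l =>
    hM.mem_of_adj_of_not_adj (hB ⟨0, hm⟩) hj (by simp) (by simp)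
  exact Set.eq_univ_of_forall (Sum.forall.2 ⟨hB, hW⟩)

theorem inr_rev_mem (hM : (halfGraph m).IsModule M) {i i' : Fin m} (hii' : i < i')
    (hi : inl i ∈ M) (hi' : inl i' ∈ M) : inr i.rev ∈ M :=
  hM.mem_of_adj_of_not_adj hi hi' (by rw [adj_inr_inl, Fin.val_rev]; omega)
    (by rw [adj_inr_inl, Fin.val_rev]; omega)

theorem inl_rev_mem (hM : (halfGraph m).IsModule M) {j j' : Fin m} (hjj' : j < j')
    (hj : inr j ∈ M) (hj' : inr j' ∈ M) : inl j.rev ∈ M :=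
  hM.mem_of_adj_of_not_adj hj hj' (by rw [adj_inl_inr, Fin.val_rev]; omega)
    (by rw [adj_inl_inr, Fin.val_rev]; omega)

theorem eq_univ_of_isModule_of_nontrivial (hM : (halfGraph m).IsModule M)
    (hnt : M.Nontrivial) : M = Set.univ := by
  obtain ⟨x, hx, y, hy, hxy⟩ := hnt
  rcases x with i | j <;> rcases y with i' | j'
  · rcases lt_or_gt_of_ne (fun h => hxy (congrArg inl h)) with h | h
    · exact eq_univ_of_inl_mem_of_inr_mem hM hx (inr_rev_mem hM h hx hy)
    · exact eq_univ_of_inl_mem_of_inr_mem hM hy (inr_rev_mem hM h hy hx)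
  · exact eq_univ_of_inl_mem_of_inr_mem hM hx hy
  · exact eq_univ_of_inl_mem_of_inr_mem hM hy hx
  · rcases lt_or_gt_of_ne (fun h => hxy (congrArg inr h)) with h | h
    · exact eq_univ_of_inl_mem_of_inr_mem hM (inl_rev_mem hM h hx hy) hx
    · exact eq_univ_of_inl_mem_of_inr_mem hM (inl_rev_mem hM h hy hx) hy

end halfGraph

end SimpleGraph

open SimpleGraph in
theorem stmt13 (m : ℕ) (hm : 2 ≤ m) : (halfGraph m).IsPrime := by
  refine ⟨by simp only [Fintype.card_sum, Fintype.card_fin]; omega, fun M hM => ?_⟩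
  rcases M.subsingleton_or_nontrivial with hs | hnt
  · rcases hs.eq_empty_or_singleton with h | h
    · exact Or.inl h
    · exact Or.inr (Or.inl h)
  · exact Or.inr (Or.inr (halfGraph.eq_univ_of_isModule_of_nontrivial hM hnt))
end

section
/- For any graph G and vertex v, a set S ⊆ V \ {v} is a module of G * v contained in N(v) if and only if S is a module of G contained in N(v). -/
open SimpleGraph in
theorem stmt16 {V : Type*} (G : SimpleGraph V) (v : V) (S : Set V)
    (hvS : v ∉ S) (hS : S ⊆ G.neighborSet v) :
    (G.seidel v).IsModule S ↔ G.IsModule S := by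
  have key : ∀ x, (∀ y ∈ S, ((G.seidel v).Adj x y ↔ G.Adj x y)) ∨
      (∀ y ∈ S, ((G.seidel v).Adj x y ↔ ¬ G.Adj x y)) := by
    intro x
    by_cases hx : G.Adj v x ∨ x = v
    · left
      intro y hy
      have hvy : G.Adj v y := hS hy
      have hyv : y ≠ v := fun h => G.irrefl (h ▸ hvy)
      have hvv : ¬ G.Adj v v := G.irrefl
      show Xor' _ _ ↔ _
      unfold Xor' Xor
      rcases hx with hx | rfl <;> tauto
    · right
      push_neg at hx
      obtain ⟨hx1, hx2⟩ := hx
      intro y hy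
      have hvy : G.Adj v y := hS hy
      show Xor' _ _ ↔ _
      unfold Xor' Xor
      tauto
  constructor <;> intro h x hx <;> rcases key x with k | k <;>
    rcases h x hx with h' | h'
  · left; intro y hy; exact (k y hy).mp (h' y hy)
  · right; intro y hy; exact fun hc => h' y hy ((k y hy).mpr hc)
  · right; intro y hy; exact (k y hy).mp (h' y hy)
  · left; intro y hy
    by_contra hc
    exact h' y hy ((k y hy).mpr hc)
  · left; intro y hy; exact (k y hy).mpr (h' y hy)
  · right; intro y hy; exact fun hc => h' y hy ((k y hy).mp hc)
  · right; intro y hy; exact fun hc => ((k y hy).mp hc) (h' y hy)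
  · left; intro y hy; exact (k y hy).mpr (h' y hy)
end
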